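/- arXiv:2303.02887 — 4 statements merged into one kernel-verified Lean document; each statement's English description precedes it below -/
import Mathlib

section
/- Let κ ≥ 1 and T ≥ κ. Then ∫_T^∞ t^(κ-1) e^(-t) dt ≤ κ · T^(κ-1) · e^(-T). -/
open MeasureTheory

/-- Gabcke's tail bound for the upper incomplete gamma function:
for `κ ≥ 1` and `T ≥ κ`, `∫_T^∞ t^(κ-1) e^(-t) dt ≤ κ T^(κ-1) e^(-T)`. -/
theorem stmt_1 (κ T : ℝ) (hκ : 1 ≤ κ) (hT : κ ≤ T) :
    ∫ t in Set.Ioi T, t ^ (κ - 1) * Real.exp (-t) ≤ κ * T ^ (κ - 1) * Real.exp (-T) := by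
  have hκ0 : (0:ℝ) < κ := by linarith
  have hT0 : (0:ℝ) < T := by linarith
  set C : ℝ := T ^ (κ - 1) * Real.exp (-T) with hC
  have hC0 : 0 ≤ C := by positivity
  -- integrability of the integrand
  have hint : IntegrableOn (fun t : ℝ => t ^ (κ - 1) * Real.exp (-t)) (Set.Ioi T) := by
    have := (Real.GammaIntegral_convergent hκ0).mono_set (Set.Ioi_subset_Ioi hT0.le)
    simpa [mul_comm] using this
  -- integrability of the majorant
  have hgint : IntegrableOn (fun t : ℝ => C * Real.exp (-(t - T) / κ)) (Set.Ioi T) := by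
    have h1 : IntegrableOn (fun t : ℝ => Real.exp (-(1/κ) * t)) (Set.Ioi T) :=
      exp_neg_integrableOn_Ioi T (by positivity)
    have h2 : IntegrableOn (fun t : ℝ => C * Real.exp (T / κ) * Real.exp (-(1/κ) * t)) (Set.Ioi T) :=
      h1.const_mul (C * Real.exp (T / κ))
    apply h2.congr_fun _ measurableSet_Ioi
    intro x _
    show C * Real.exp (T / κ) * Real.exp (-(1/κ) * x) = C * Real.exp (-(x - T) / κ)
    rw [mul_assoc, ← Real.exp_add, show T / κ + -(1/κ) * x = -(x - T) / κ from by ring]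
  -- pointwise bound
  have hbound : ∀ t ∈ Set.Ioi T, t ^ (κ - 1) * Real.exp (-t) ≤ C * Real.exp (-(t - T) / κ) := by
    intro t ht
    have htT : T < t := ht
    have ht0 : 0 < t := hT0.trans htT
    have hdiv : (0:ℝ) < t / T := by positivity
    have h1 : t ^ (κ - 1) = T ^ (κ - 1) * (t / T) ^ (κ - 1) := by
      rw [Real.div_rpow ht0.le hT0.le]
      field_simp
    have h2 : (t / T) ^ (κ - 1) ≤ Real.exp ((κ - 1) * (t / T - 1)) := by
      rw [Real.rpow_def_of_pos hdiv, Real.exp_le_exp]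
      have := Real.log_le_sub_one_of_pos hdiv
      nlinarith [sub_nonneg.mpr hκ]
    have h3 : (κ - 1) * (t / T - 1) - t ≤ -T + -(t - T) / κ := by
      have e1 : (κ - 1) * (t / T - 1) = (κ - 1) * (t - T) / T := by
        field_simp
      have e2 : (κ - 1) * (t - T) / T ≤ (κ - 1) * (t - T) / κ := by
        apply div_le_div_of_nonneg_left _ hκ0 hT
        nlinarith
      have e3 : (κ - 1) * (t - T) / κ - t = -T + -(t - T) / κ := by
        field_simp <;> ring
      linarith [e1 ▸ e2, e3]
    calc t ^ (κ - 1) * Real.exp (-t)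
        = T ^ (κ - 1) * ((t / T) ^ (κ - 1) * Real.exp (-t)) := by rw [h1]; ring
      _ ≤ T ^ (κ - 1) * (Real.exp ((κ - 1) * (t / T - 1)) * Real.exp (-t)) := by
          gcongr
      _ = T ^ (κ - 1) * Real.exp ((κ - 1) * (t / T - 1) - t) := by
          rw [← Real.exp_add, ← sub_eq_add_neg]
      _ ≤ T ^ (κ - 1) * Real.exp (-T + -(t - T) / κ) := by
          gcongr
      _ = C * Real.exp (-(t - T) / κ) := by rw [hC, Real.exp_add]; ring
  -- compare integrals
  have hmono : ∫ t in Set.Ioi T, t ^ (κ - 1) * Real.exp (-t)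
      ≤ ∫ t in Set.Ioi T, C * Real.exp (-(t - T) / κ) :=
    setIntegral_mono_on hint hgint measurableSet_Ioi hbound
  -- compute the majorant's integral
  have hval : ∫ t in Set.Ioi T, Real.exp (-(t - T) / κ) = κ := by
    have hderiv : ∀ x ∈ Set.Ici T,
        HasDerivAt (fun x : ℝ => -κ * Real.exp (-(x - T) / κ)) (Real.exp (-(x - T) / κ)) x := by
      intro x _
      have h1 : HasDerivAt (fun x : ℝ => -(x - T) / κ) (-1 / κ) x :=
        (((hasDerivAt_id x).sub_const T).neg).div_const κ
      have h2 := (h1.exp).const_mul (-κ)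
      refine h2.congr_deriv ?_
      have hk : κ ≠ 0 := hκ0.ne'
      rw [mul_comm (Real.exp _), ← mul_assoc, show -κ * (-1 / κ) = 1 by field_simp, one_mul]
    have htend : Filter.Tendsto (fun x : ℝ => -κ * Real.exp (-(x - T) / κ))
        Filter.atTop (nhds 0) := by
      have h1 : Filter.Tendsto (fun x : ℝ => -(x - T) / κ) Filter.atTop Filter.atBot := by
        apply Filter.Tendsto.atBot_div_const hκ0
        exact Filter.tendsto_neg_atBot_iff.mpr (Filter.tendsto_atTop_add_const_right _ _ Filter.tendsto_id)
      have h2 := Real.tendsto_exp_atBot.comp h1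
      have := h2.const_mul (-κ)
      simpa using this
    have hint2 : IntegrableOn (fun x : ℝ => Real.exp (-(x - T) / κ)) (Set.Ioi T) := by
      have h1 : IntegrableOn (fun t : ℝ => Real.exp (T / κ) * Real.exp (-(1/κ) * t)) (Set.Ioi T) :=
        (exp_neg_integrableOn_Ioi T (by positivity)).const_mul _
      apply h1.congr_fun _ measurableSet_Ioi
      intro x _
      show Real.exp (T / κ) * Real.exp (-(1/κ) * x) = Real.exp (-(x - T) / κ)
      rw [← Real.exp_add, show T / κ + -(1/κ) * x = -(x - T) / κ from by ring]
    have := MeasureTheory.integral_Ioi_of_hasDerivAt_of_tendsto' hderiv hint2 htend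
    rw [this]
    norm_num
  calc ∫ t in Set.Ioi T, t ^ (κ - 1) * Real.exp (-t)
      ≤ ∫ t in Set.Ioi T, C * Real.exp (-(t - T) / κ) := hmono
    _ = C * κ := by rw [MeasureTheory.integral_const_mul, hval]
    _ = κ * T ^ (κ - 1) * Real.exp (-T) := by rw [hC]; ring
end

section
/- In the hierarchical model where σ² ~ G (with support in (0,∞)), Z | σ² ~ N(0, σ²), S² | σ² ~ (σ²/ν)·χ²_ν (independent given σ²), the conditional p-value P_G(z, s²) = E_G[2(1 - Φ(|z|/σ)) | S² = s²] is non-increasing in |z| for each fixed s² > 0, and non-decreasing in s² > 0 for each fixed |z|. -/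
open MeasureTheory ProbabilityTheory

/-- Standard normal CDF `Φ`. -/
noncomputable def stdNormalCDF (x : ℝ) : ℝ :=
  (gaussianReal 0 1 (Set.Iic x)).toReal

/-- Scaled chi-squared likelihood of the sample variance `s²` given the variance `σ² = v`:
the density of `(v/ν) χ²_ν` at `s²`. -/
noncomputable def sampleVarLik (ν v s2 : ℝ) : ℝ :=
  ν ^ (ν / 2) / (v ^ (ν / 2) * 2 ^ (ν / 2) * Real.Gamma (ν / 2)) *
    s2 ^ (ν / 2 - 1) * Real.exp (-(ν * s2) / (2 * v))

/-- The oracle conditional (partially Bayes) p-value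
`P_G(z, s²) = E_G[2(1 - Φ(|z|/σ)) ∣ S² = s²]`. -/
noncomputable def condPValue (G : Measure ℝ) (ν z s2 : ℝ) : ℝ :=
  (∫ v, 2 * (1 - stdNormalCDF (|z| / Real.sqrt v)) * sampleVarLik ν v s2 ∂G) /
    (∫ v, sampleVarLik ν v s2 ∂G)

section Aux

lemma stdNormalCDF_mono : Monotone stdNormalCDF := fun _ _ h =>
  ENNReal.toReal_mono (measure_ne_top _ _) (measure_mono (Set.Iic_subset_Iic.2 h))

lemma stdNormalCDF_le_one (x : ℝ) : stdNormalCDF x ≤ 1 := by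
  have h : (gaussianReal 0 1) (Set.Iic x) ≤ 1 := prob_le_one
  have := ENNReal.toReal_mono ENNReal.one_ne_top h
  simpa [stdNormalCDF] using this

lemma stdNormalCDF_nonneg (x : ℝ) : 0 ≤ stdNormalCDF x := ENNReal.toReal_nonneg

lemma stdNormalCDF_measurable : Measurable stdNormalCDF := stdNormalCDF_mono.measurable

lemma lik_meas (ν s2 : ℝ) : Measurable fun v => sampleVarLik ν v s2 := by
  unfold sampleVarLik
  fun_prop

lemma lik_pos {ν v s2 : ℝ} (hν : 2 ≤ ν) (hv : 0 < v) (hs2 : 0 < s2) :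
    0 < sampleVarLik ν v s2 := by
  have hν2 : 0 < ν / 2 := by linarith
  have hΓ := Real.Gamma_pos_of_pos hν2
  have hνpos : (0:ℝ) < ν := by linarith
  unfold sampleVarLik
  positivity

lemma lik_bound {ν s2 : ℝ} (hν : 2 ≤ ν) (hs2 : 0 < s2) :
    ∃ M : ℝ, ∀ v, 0 < v → sampleVarLik ν v s2 ≤ M := by
  have hν2 : (1:ℝ) ≤ ν / 2 := by linarith
  have hνpos : (0:ℝ) < ν := by linarith
  set c : ℝ := ν * s2 / 2 with hc
  have hcpos : 0 < c := by positivity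
  set n : ℕ := ⌈ν / 2⌉₊ with hn
  have han : ν / 2 ≤ (n : ℝ) := Nat.le_ceil _
  have hΓ := Real.Gamma_pos_of_pos (by linarith : (0:ℝ) < ν / 2)
  refine ⟨(ν ^ (ν/2) / (2 ^ (ν/2) * Real.Gamma (ν/2)) * s2 ^ (ν/2 - 1)) *
    max 1 ((n.factorial : ℝ) / c ^ n), fun v hv => ?_⟩
  have hC : 0 ≤ ν ^ (ν/2) / (2 ^ (ν/2) * Real.Gamma (ν/2)) * s2 ^ (ν/2 - 1) := by positivity
  have key : (v ^ (ν/2))⁻¹ * Real.exp (-(c / v)) ≤ max 1 ((n.factorial : ℝ) / c ^ n) := by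
    set t : ℝ := v⁻¹ with ht
    have htpos : 0 < t := by positivity
    have h1 : (v ^ (ν/2))⁻¹ = t ^ (ν/2) := by
      rw [ht, Real.inv_rpow hv.le]
    have h2 : c / v = c * t := by rw [ht, div_eq_mul_inv]
    rw [h1, h2]
    rcases le_total t 1 with htle | htge
    · have : t ^ (ν/2) ≤ 1 := Real.rpow_le_one htpos.le htle (by linarith)
      have he : Real.exp (-(c * t)) ≤ 1 := Real.exp_le_one_iff.2 (by nlinarith)
      calc t ^ (ν/2) * Real.exp (-(c*t)) ≤ 1 * 1 := by
            apply mul_le_mul this he (Real.exp_pos _).le zero_le_one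
        _ ≤ max 1 _ := by simp
    · have h3 : t ^ (ν/2) ≤ t ^ (n:ℝ) := Real.rpow_le_rpow_of_exponent_le htge han
      rw [Real.rpow_natCast] at h3
      have hct : (0:ℝ) ≤ c * t := by positivity
      have h4 : (c*t)^n / (n.factorial : ℝ) ≤ Real.exp (c*t) := by
        have hs := Real.sum_le_exp_of_nonneg hct (n+1)
        have h5 : (c*t)^n / (n.factorial:ℝ) ≤
            ∑ i ∈ Finset.range (n+1), (c*t)^i / (i.factorial:ℝ) := by
          apply Finset.single_le_sum (f := fun i => (c*t)^i / (i.factorial:ℝ))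
            (fun i _ => by positivity) (Finset.self_mem_range_succ n)
        calc (c*t)^n / (n.factorial:ℝ) ≤ _ := h5
          _ ≤ Real.exp (c*t) := by simpa using hs
      have h6 : c^n * t^n ≤ (n.factorial : ℝ) * Real.exp (c*t) := by
        rw [div_le_iff₀ (by positivity)] at h4
        calc c^n * t^n = (c*t)^n := (mul_pow c t n).symm
          _ ≤ Real.exp (c*t) * n.factorial := h4
          _ = (n.factorial : ℝ) * Real.exp (c*t) := mul_comm _ _
      have hexp : (0:ℝ) < Real.exp (c*t) := Real.exp_pos _
      have hcn : (0:ℝ) < c^n := pow_pos hcpos n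
      have h7 : t^n * Real.exp (-(c*t)) ≤ (n.factorial:ℝ) / c^n := by
        rw [Real.exp_neg, ← div_eq_mul_inv, div_le_div_iff₀ hexp hcn]
        nlinarith
      calc t ^ (ν/2) * Real.exp (-(c*t)) ≤ t^n * Real.exp (-(c*t)) :=
            mul_le_mul_of_nonneg_right h3 (Real.exp_pos _).le
        _ ≤ (n.factorial:ℝ) / c^n := h7
        _ ≤ max 1 _ := le_max_right _ _
  have hsplit : sampleVarLik ν v s2 =
      (ν ^ (ν/2) / (2 ^ (ν/2) * Real.Gamma (ν/2)) * s2 ^ (ν/2 - 1)) *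
      ((v ^ (ν/2))⁻¹ * Real.exp (-(c / v))) := by
    unfold sampleVarLik
    have : -(ν * s2) / (2 * v) = -(c / v) := by
      rw [hc]; field_simp
    rw [this]; ring
  rw [hsplit]
  exact mul_le_mul_of_nonneg_left key hC

lemma ae_pos_of_compl {G : Measure ℝ} (hG : G (Set.Ioi 0)ᶜ = 0) : ∀ᵐ v ∂G, 0 < v := by
  rw [ae_iff]
  have : {a : ℝ | ¬ 0 < a} = (Set.Ioi 0)ᶜ := by ext x; simp
  rw [this]; exact hG

lemma chebyshev_corr {μ : Measure ℝ} [IsProbabilityMeasure μ] {f g w : ℝ → ℝ}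
    (hfw : Integrable (fun x => f x * w x) μ)
    (hgw : Integrable (fun x => g x * w x) μ)
    (hfgw : Integrable (fun x => f x * (g x * w x)) μ)
    (hw : Integrable w μ)
    (hsync : ∀ᵐ p ∂(μ.prod μ),
      0 ≤ (f p.1 - f p.2) * (g p.1 - g p.2) * (w p.1 * w p.2)) :
    (∫ x, f x * w x ∂μ) * (∫ x, g x * w x ∂μ) ≤
      (∫ x, f x * (g x * w x) ∂μ) * (∫ x, w x ∂μ) := by
  have hA : Integrable (fun p : ℝ × ℝ => (f p.1 * (g p.1 * w p.1)) * w p.2) (μ.prod μ) :=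
    hfgw.mul_prod hw
  have hB : Integrable (fun p : ℝ × ℝ => (f p.1 * w p.1) * (g p.2 * w p.2)) (μ.prod μ) :=
    hfw.mul_prod hgw
  have hC : Integrable (fun p : ℝ × ℝ => (g p.1 * w p.1) * (f p.2 * w p.2)) (μ.prod μ) :=
    hgw.mul_prod hfw
  have hD : Integrable (fun p : ℝ × ℝ => w p.1 * (f p.2 * (g p.2 * w p.2))) (μ.prod μ) :=
    hw.mul_prod hfgw
  have key : 0 ≤ ∫ p : ℝ × ℝ,
      (((f p.1 * (g p.1 * w p.1)) * w p.2 - (f p.1 * w p.1) * (g p.2 * w p.2)) -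
       ((g p.1 * w p.1) * (f p.2 * w p.2) - w p.1 * (f p.2 * (g p.2 * w p.2)))) ∂(μ.prod μ) := by
    apply integral_nonneg_of_ae
    filter_upwards [hsync] with p hp
    calc (0:ℝ) ≤ (f p.1 - f p.2) * (g p.1 - g p.2) * (w p.1 * w p.2) := hp
      _ = _ := by ring
  have esplit : ∫ p : ℝ × ℝ,
      (((f p.1 * (g p.1 * w p.1)) * w p.2 - (f p.1 * w p.1) * (g p.2 * w p.2)) -
       ((g p.1 * w p.1) * (f p.2 * w p.2) - w p.1 * (f p.2 * (g p.2 * w p.2)))) ∂(μ.prod μ) =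
      (∫ p : ℝ × ℝ, ((f p.1 * (g p.1 * w p.1)) * w p.2 - (f p.1 * w p.1) * (g p.2 * w p.2)) ∂(μ.prod μ)) -
      ∫ p : ℝ × ℝ, ((g p.1 * w p.1) * (f p.2 * w p.2) - w p.1 * (f p.2 * (g p.2 * w p.2))) ∂(μ.prod μ) :=
    integral_sub (hA.sub hB) (hC.sub hD)
  have e1 : ∫ p : ℝ × ℝ, ((f p.1 * (g p.1 * w p.1)) * w p.2 - (f p.1 * w p.1) * (g p.2 * w p.2)) ∂(μ.prod μ) =
      (∫ p : ℝ × ℝ, (f p.1 * (g p.1 * w p.1)) * w p.2 ∂(μ.prod μ)) -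
      ∫ p : ℝ × ℝ, (f p.1 * w p.1) * (g p.2 * w p.2) ∂(μ.prod μ) := integral_sub hA hB
  have e2 : ∫ p : ℝ × ℝ, ((g p.1 * w p.1) * (f p.2 * w p.2) - w p.1 * (f p.2 * (g p.2 * w p.2))) ∂(μ.prod μ) =
      (∫ p : ℝ × ℝ, (g p.1 * w p.1) * (f p.2 * w p.2) ∂(μ.prod μ)) -
      ∫ p : ℝ × ℝ, w p.1 * (f p.2 * (g p.2 * w p.2)) ∂(μ.prod μ) := integral_sub hC hD
  rw [esplit, e1, e2] at key
  have eA : ∫ p : ℝ × ℝ, (f p.1 * (g p.1 * w p.1)) * w p.2 ∂(μ.prod μ) =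
      (∫ x, f x * (g x * w x) ∂μ) * ∫ x, w x ∂μ :=
    integral_prod_mul (fun x => f x * (g x * w x)) w
  have eB : ∫ p : ℝ × ℝ, (f p.1 * w p.1) * (g p.2 * w p.2) ∂(μ.prod μ) =
      (∫ x, f x * w x ∂μ) * ∫ x, g x * w x ∂μ :=
    integral_prod_mul (fun x => f x * w x) (fun x => g x * w x)
  have eC : ∫ p : ℝ × ℝ, (g p.1 * w p.1) * (f p.2 * w p.2) ∂(μ.prod μ) =
      (∫ x, g x * w x ∂μ) * ∫ x, f x * w x ∂μ :=
    integral_prod_mul (fun x => g x * w x) (fun x => f x * w x)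
  have eD : ∫ p : ℝ × ℝ, w p.1 * (f p.2 * (g p.2 * w p.2)) ∂(μ.prod μ) =
      (∫ x, w x ∂μ) * ∫ x, f x * (g x * w x) ∂μ :=
    integral_prod_mul w (fun x => f x * (g x * w x))
  rw [eA, eB, eC, eD] at key
  linarith

variable {G : Measure ℝ} [IsProbabilityMeasure G]

lemma integrable_mul_lik (hG : G (Set.Ioi 0)ᶜ = 0) {ν s2 : ℝ} (hν : 2 ≤ ν) (hs2 : 0 < s2)
    {h : ℝ → ℝ} (hm : Measurable h) {C : ℝ} (hb : ∀ v, 0 < v → |h v| ≤ C) :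
    Integrable (fun v => h v * sampleVarLik ν v s2) G := by
  obtain ⟨M, hM⟩ := lik_bound hν hs2
  have hC0 : 0 ≤ C := le_trans (abs_nonneg _) (hb 1 one_pos)
  refine Integrable.mono' (integrable_const (C * M))
    ((hm.mul (lik_meas ν s2)).aestronglyMeasurable) ?_
  filter_upwards [ae_pos_of_compl hG] with v hv
  have h1 := hb v hv
  have h2 := hM v hv
  have h3 := (lik_pos hν hv hs2).le
  have : ‖h v * sampleVarLik ν v s2‖ = |h v| * |sampleVarLik ν v s2| := abs_mul _ _
  rw [this, abs_of_nonneg h3]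
  exact mul_le_mul h1 h2 h3 hC0

lemma integral_mul_lik_pos (hG : G (Set.Ioi 0)ᶜ = 0) {ν s2 : ℝ} (hν : 2 ≤ ν) (hs2 : 0 < s2)
    {h : ℝ → ℝ} (hm : Measurable h) {C : ℝ} (hb : ∀ v, 0 < v → |h v| ≤ C)
    (hpos : ∀ v, 0 < v → 0 < h v) :
    0 < ∫ v, h v * sampleVarLik ν v s2 ∂G := by
  have hnn : 0 ≤ᵐ[G] fun v => h v * sampleVarLik ν v s2 := by
    filter_upwards [ae_pos_of_compl hG] with v hv
    exact (mul_pos (hpos v hv) (lik_pos hν hv hs2)).le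
  rw [integral_pos_iff_support_of_nonneg_ae hnn (integrable_mul_lik hG hν hs2 hm hb)]
  have hsub : Set.Ioi (0:ℝ) ⊆ Function.support fun v => h v * sampleVarLik ν v s2 :=
    fun v hv => (mul_pos (hpos v hv) (lik_pos hν hv hs2)).ne'
  have h1 : G (Set.Ioi 0) = 1 := (prob_compl_eq_zero_iff measurableSet_Ioi).mp hG
  calc (0:ENNReal) < 1 := zero_lt_one
    _ = G (Set.Ioi 0) := h1.symm
    _ ≤ _ := measure_mono hsub

lemma fz_meas (z : ℝ) :
    Measurable fun v : ℝ => 2 * (1 - stdNormalCDF (|z| / Real.sqrt v)) := by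
  apply Measurable.const_mul
  apply Measurable.const_sub
  exact stdNormalCDF_measurable.comp (measurable_const.div Real.continuous_sqrt.measurable)

lemma fz_bound (z v : ℝ) : |2 * (1 - stdNormalCDF (|z| / Real.sqrt v))| ≤ 2 := by
  have h1 := stdNormalCDF_le_one (|z| / Real.sqrt v)
  have h2 := stdNormalCDF_nonneg (|z| / Real.sqrt v)
  rw [abs_of_nonneg (by linarith)]
  linarith

lemma fz_mono {z x y : ℝ} (hx : 0 < x) (hxy : x ≤ y) :
    2 * (1 - stdNormalCDF (|z| / Real.sqrt x)) ≤ 2 * (1 - stdNormalCDF (|z| / Real.sqrt y)) := by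
  have hsx : 0 < Real.sqrt x := Real.sqrt_pos.2 hx
  have h1 : |z| / Real.sqrt y ≤ |z| / Real.sqrt x := by
    apply div_le_div_of_nonneg_left (abs_nonneg z) hsx (Real.sqrt_le_sqrt hxy)
  have := stdNormalCDF_mono h1
  linarith

end Aux

/-- Monotonicity of the oracle conditional p-value: it is non-increasing in `|z|`
for fixed `s² > 0`, and non-decreasing in `s² > 0` for fixed `|z|`. -/
theorem stmt_7 (G : Measure ℝ) [IsProbabilityMeasure G] (hG : G (Set.Ioi 0)ᶜ = 0)
    (ν : ℝ) (hν : 2 ≤ ν) :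
    (∀ s2 z z' : ℝ, 0 < s2 → |z| ≤ |z'| →
      condPValue G ν z' s2 ≤ condPValue G ν z s2) ∧
    (∀ z s2 s2' : ℝ, 0 < s2 → s2 ≤ s2' →
      condPValue G ν z s2 ≤ condPValue G ν z s2') := by
  have hone : ∀ v : ℝ, (0:ℝ) < v → |(1:ℝ)| ≤ 1 := fun _ _ => by simp
  have hDen : ∀ s2 : ℝ, 0 < s2 → 0 < ∫ v, sampleVarLik ν v s2 ∂G := by
    intro s2 hs2
    have := integral_mul_lik_pos hG hν hs2 (h := fun _ => (1:ℝ)) measurable_const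
      hone (fun _ _ => one_pos)
    simpa using this
  constructor
  · -- monotone (non-increasing) in |z|
    intro s2 z z' hs2 hzz
    unfold condPValue
    have hD := hDen s2 hs2
    rw [div_le_div_iff_of_pos_right hD]
    apply integral_mono_ae
      (integrable_mul_lik hG hν hs2 (fz_meas z') (fun v _ => fz_bound z' v))
      (integrable_mul_lik hG hν hs2 (fz_meas z) (fun v _ => fz_bound z v))
    filter_upwards [ae_pos_of_compl hG] with v hv
    have hL := (lik_pos hν hv hs2).le
    have hsv : 0 < Real.sqrt v := Real.sqrt_pos.2 hv
    have hphi : |z| / Real.sqrt v ≤ |z'| / Real.sqrt v :=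
      by gcongr
    have hmono := stdNormalCDF_mono hphi
    have hcmp : 2 * (1 - stdNormalCDF (|z'| / Real.sqrt v)) ≤
        2 * (1 - stdNormalCDF (|z| / Real.sqrt v)) := by linarith
    exact mul_le_mul_of_nonneg_right hcmp hL
  · -- monotone (non-decreasing) in s²
    intro z s2 s2' hs2 hss
    have hs2' : 0 < s2' := lt_of_lt_of_le hs2 hss
    have hD := hDen s2 hs2
    set g : ℝ → ℝ := fun v => Real.exp (-(ν * (s2' - s2)) / (2 * v)) with hgdef
    have hgmeas : Measurable g := by rw [hgdef]; fun_prop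
    have hgbound : ∀ v, 0 < v → |g v| ≤ 1 := by
      intro v hv
      rw [hgdef, abs_of_pos (Real.exp_pos _)]
      apply Real.exp_le_one_iff.2
      apply div_nonpos_of_nonpos_of_nonneg
      · nlinarith
      · linarith
    have hgpos : ∀ v, 0 < v → 0 < g v := fun v _ => Real.exp_pos _
    have hK : (0:ℝ) < (s2' / s2) ^ (ν / 2 - 1) :=
      Real.rpow_pos_of_pos (div_pos hs2' hs2) _
    have hfact : ∀ v, sampleVarLik ν v s2' =
        (s2' / s2) ^ (ν / 2 - 1) * (g v * sampleVarLik ν v s2) := by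
      intro v
      unfold sampleVarLik
      have h1 : s2' ^ (ν/2-1) = (s2'/s2) ^ (ν/2-1) * s2 ^ (ν/2-1) := by
        rw [← Real.mul_rpow (by positivity) hs2.le, div_mul_cancel₀ _ hs2.ne']
      have h2 : Real.exp (-(ν * s2') / (2*v)) = g v * Real.exp (-(ν * s2) / (2*v)) := by
        rw [hgdef]
        rw [← Real.exp_add, ← add_div]
        have : -(ν * (s2' - s2)) + -(ν * s2) = -(ν * s2') := by ring
        rw [this]
      rw [h1, h2]; ring
    have hnum : ∫ v, 2 * (1 - stdNormalCDF (|z| / Real.sqrt v)) * sampleVarLik ν v s2' ∂G =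
        (s2'/s2) ^ (ν/2-1) *
          ∫ v, 2 * (1 - stdNormalCDF (|z| / Real.sqrt v)) * (g v * sampleVarLik ν v s2) ∂G := by
      rw [← integral_const_mul]
      refine integral_congr_ae (Filter.Eventually.of_forall fun v => ?_)
      simp only [hfact v]; ring
    have hden : ∫ v, sampleVarLik ν v s2' ∂G =
        (s2'/s2) ^ (ν/2-1) * ∫ v, g v * sampleVarLik ν v s2 ∂G := by
      rw [← integral_const_mul]
      refine integral_congr_ae (Filter.Eventually.of_forall fun v => ?_)
      simp only [hfact v]
    have hDg : 0 < ∫ v, g v * sampleVarLik ν v s2 ∂G :=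
      integral_mul_lik_pos hG hν hs2 hgmeas hgbound hgpos
    unfold condPValue
    rw [hnum, hden, mul_div_mul_left _ _ (ne_of_gt hK), div_le_div_iff₀ hD hDg]
    -- Chebyshev's correlation inequality
    have hfw := integrable_mul_lik hG hν hs2 (fz_meas z) (fun v _ => fz_bound z v)
    have hgw := integrable_mul_lik hG hν hs2 hgmeas hgbound
    have hfgw : Integrable
        (fun v => 2 * (1 - stdNormalCDF (|z| / Real.sqrt v)) * (g v * sampleVarLik ν v s2)) G := by
      have hb : ∀ v, 0 < v → |2 * (1 - stdNormalCDF (|z| / Real.sqrt v)) * g v| ≤ 2 := by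
        intro v hv
        rw [abs_mul]
        calc |2 * (1 - stdNormalCDF (|z| / Real.sqrt v))| * |g v| ≤ 2 * 1 :=
              mul_le_mul (fz_bound z v) (hgbound v hv) (abs_nonneg _) (by norm_num)
          _ = 2 := by norm_num
      have := integrable_mul_lik hG hν hs2 ((fz_meas z).mul hgmeas) hb
      simpa only [Pi.mul_apply, mul_assoc] using this
    have haeprod : ∀ᵐ p : ℝ × ℝ ∂(G.prod G), 0 < p.1 ∧ 0 < p.2 := by
      rw [ae_iff]
      have hsubset : {p : ℝ × ℝ | ¬(0 < p.1 ∧ 0 < p.2)} ⊆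
          ((Set.Ioi 0)ᶜ ×ˢ (Set.univ : Set ℝ)) ∪ ((Set.univ : Set ℝ) ×ˢ (Set.Ioi 0)ᶜ) := by
        intro p hp
        simp only [Set.mem_setOf_eq, not_and_or] at hp
        rcases hp with h | h
        · left; exact ⟨by simpa using h, trivial⟩
        · right; exact ⟨trivial, by simpa using h⟩
      refine measure_mono_null hsubset ?_
      refine le_antisymm ?_ zero_le
      calc (G.prod G) (((Set.Ioi 0)ᶜ ×ˢ (Set.univ : Set ℝ)) ∪ ((Set.univ : Set ℝ) ×ˢ (Set.Ioi 0)ᶜ))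
          ≤ (G.prod G) ((Set.Ioi 0)ᶜ ×ˢ (Set.univ : Set ℝ)) +
            (G.prod G) ((Set.univ : Set ℝ) ×ˢ (Set.Ioi 0)ᶜ) := measure_union_le _ _
        _ = 0 := by rw [Measure.prod_prod, Measure.prod_prod, hG]; simp
    apply chebyshev_corr hfw hgw hfgw
      (by simpa using integrable_mul_lik hG hν hs2 measurable_const hone)
    filter_upwards [haeprod] with p hp
    obtain ⟨h1, h2⟩ := hp
    have hw1 := (lik_pos hν h1 hs2).le
    have hw2 := (lik_pos hν h2 hs2).le
    have hgm : ∀ x y : ℝ, 0 < x → x ≤ y → g x ≤ g y := by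
      intro x y hx hxy
      rw [hgdef]
      apply Real.exp_le_exp.2
      rw [neg_div, neg_div]
      apply neg_le_neg
      apply div_le_div_of_nonneg_left (by nlinarith) (by linarith) (by linarith)
    have hmono : 0 ≤ (2 * (1 - stdNormalCDF (|z| / Real.sqrt p.1)) -
        2 * (1 - stdNormalCDF (|z| / Real.sqrt p.2))) * (g p.1 - g p.2) := by
      rcases le_total p.1 p.2 with hle | hle
      · have hf := fz_mono (z := z) h1 hle
        have hg := hgm p.1 p.2 h1 hle
        nlinarith
      · have hf := fz_mono (z := z) h2 hle
        have hg := hgm p.2 p.1 h2 hle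
        nlinarith
    exact mul_nonneg hmono (mul_nonneg hw1 hw2)
end

section
/- Let P₁(x),…,P_n(x) be nonzero real polynomials of degrees m₁-1,…,m_n-1 (each mᵢ ≥ 1) and let a₁ < a₂ < … < a_n be real numbers. Then the function g(x) = Σ_{i=1}^n Pᵢ(x) e^(aᵢ x) has at most (Σ_{i=1}^n mᵢ) - 1 real zeros, counting multiplicity. -/
open scoped ContDiff
open Polynomial

lemma contDiff_polyeval (p : Polynomial ℝ) : ContDiff ℝ ∞ fun x : ℝ => p.eval x := by
  induction p using Polynomial.induction_on' with
  | add p q hp hq => simpa using hp.add hq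
  | monomial n c =>
      simpa [Polynomial.eval_monomial] using contDiff_const.mul (contDiff_id.pow n)

lemma iteratedDeriv_add' {n : ℕ} {f g : ℝ → ℝ} (hf : ContDiff ℝ n f) (hg : ContDiff ℝ n g)
    (x : ℝ) :
    iteratedDeriv n (fun y => f y + g y) x = iteratedDeriv n f x + iteratedDeriv n g x := by
  simp only [iteratedDeriv]
  rw [show (fun y => f y + g y) = f + g from rfl, iteratedFDeriv_add_apply hf.contDiffAt hg.contDiffAt]
  rfl

/-- If `g` vanishes to order `> k` at `x`, so does `u * g` for smooth `u`. -/
lemma vanish_mul : ∀ (k : ℕ) (u g : ℝ → ℝ), ContDiff ℝ ∞ u → ContDiff ℝ ∞ g →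
    ∀ x : ℝ, (∀ j ≤ k, iteratedDeriv j g x = 0) →
    iteratedDeriv k (fun y => u y * g y) x = 0 := by
  intro k
  induction k with
  | zero =>
      intro u g hu hg x hv
      simpa using Or.inr (hv 0 le_rfl)
  | succ k ih =>
      intro u g hu hg x hv
      have hu' : ContDiff ℝ ∞ (deriv u) := (contDiff_infty_iff_deriv.mp hu).2
      have hg' : ContDiff ℝ ∞ (deriv g) := (contDiff_infty_iff_deriv.mp hg).2
      have hd : deriv (fun y => u y * g y)
          = fun y => (deriv u y * g y + u y * deriv g y) := by
        funext y
        exact deriv_mul (hu.differentiable (by simp) y) (hg.differentiable (by simp) y)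
      rw [iteratedDeriv_succ', hd]
      have h1 : ContDiff ℝ (k : WithTop ℕ∞) (fun y => deriv u y * g y) :=
        ((hu'.mul hg).of_le (by exact_mod_cast le_top))
      have h2 : ContDiff ℝ (k : WithTop ℕ∞) (fun y => u y * deriv g y) :=
        ((hu.mul hg').of_le (by exact_mod_cast le_top))
      rw [iteratedDeriv_add' h1 h2 x]
      rw [ih (deriv u) g hu' hg x (fun j hj => hv j (hj.trans (Nat.le_succ k))),
        ih u (deriv g) hu hg' x (fun j hj => by
          rw [← iteratedDeriv_succ']; exact hv (j+1) (Nat.succ_le_succ hj))]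
      ring

/-- zero-counting bound predicate -/
def ZB (g : ℝ → ℝ) (M : ℕ) : Prop :=
  ∀ (Z : Finset ℝ) (mult : ℝ → ℕ), (∀ x ∈ Z, 0 < mult x) →
    (∀ x ∈ Z, ∀ j < mult x, iteratedDeriv j g x = 0) →
    ∑ x ∈ Z, mult x ≤ M

lemma rolle_count (f : ℝ → ℝ) (hf : Continuous f) :
    ∀ (Z : Finset ℝ) (mult : ℝ → ℕ), (∀ x ∈ Z, 0 < mult x) →
    (∀ x ∈ Z, ∀ j < mult x, iteratedDeriv j f x = 0) →
    ∃ (Z' : Finset ℝ) (mult' : ℝ → ℕ),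
      (∀ x ∈ Z', ∀ j < mult' x, iteratedDeriv j (deriv f) x = 0) ∧
      (∀ y ∈ Z', ∃ x ∈ Z, y ≤ x) ∧
      ∑ x ∈ Z, mult x ≤ (∑ x ∈ Z', mult' x) + 1 := by
  intro Z
  induction Z using Finset.strongInduction with
  | _ Z ih =>
    intro mult hpos hzero
    rcases Z.eq_empty_or_nonempty with rfl | hne
    · exact ⟨∅, fun _ => 0, by simp, by simp, by simp⟩
    · set x := Z.max' hne with hx
      have hxZ : x ∈ Z := Z.max'_mem hne
      have hmx : 0 < mult x := hpos x hxZ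
      have hfx : f x = 0 := by simpa using hzero x hxZ 0 hmx
      set Z₀ := Z.erase x with hZ₀
      obtain ⟨Z₀', mult₀', hz0, hb0, hs0⟩ :=
        ih Z₀ (Z.erase_ssubset hxZ) mult
          (fun y hy => hpos y (Finset.mem_of_mem_erase hy))
          (fun y hy => hzero y (Finset.mem_of_mem_erase hy))
      have hsumZ : ∑ y ∈ Z, mult y = mult x + ∑ y ∈ Z₀, mult y :=
        (Finset.add_sum_erase Z mult hxZ).symm
      rcases Z₀.eq_empty_or_nonempty with h0 | hne₀
      · -- Z = {x}
        have hZ0'empty : Z₀' = ∅ := by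
          refine Finset.eq_empty_of_forall_notMem fun y hy => ?_
          obtain ⟨w, hw, -⟩ := hb0 y hy
          simp [h0] at hw
        refine ⟨{x}, fun y => if y = x then mult x - 1 else 0, ?_, ?_, ?_⟩
        · intro y hy j hj
          simp only [Finset.mem_singleton] at hy
          subst hy
          simp at hj
          rw [← iteratedDeriv_succ']
          exact hzero x hxZ (j+1) (by omega)
        · intro y hy
          simp only [Finset.mem_singleton] at hy
          exact ⟨x, hxZ, le_of_eq hy⟩
        · rw [hsumZ, h0]
          simp
          omega
      · -- Z₀ nonempty; Rolle point between b and x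
        set b := Z₀.max' hne₀ with hbdef
        have hbZ₀ : b ∈ Z₀ := Z₀.max'_mem hne₀
        have hbZ : b ∈ Z := Finset.mem_of_mem_erase hbZ₀
        have hbx : b < x := lt_of_le_of_ne (Z.le_max' b hbZ) (Finset.ne_of_mem_erase hbZ₀)
        have hfb : f b = 0 := by simpa using hzero b hbZ 0 (hpos b hbZ)
        obtain ⟨y, hy, hdy⟩ :=
          exists_deriv_eq_zero hbx hf.continuousOn (hfb.trans hfx.symm)
        have hby : b < y := hy.1
        have hyx : y < x := hy.2
        -- all elements of Z₀' are ≤ b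
        have hZ0le : ∀ z ∈ Z₀', z ≤ b := by
          intro z hz
          obtain ⟨w, hw, hzw⟩ := hb0 z hz
          exact hzw.trans (Z₀.le_max' w hw)
        have hyZ0' : y ∉ Z₀' := fun h => absurd (hZ0le y h) (not_le.mpr hby)
        have hxZ0' : x ∉ Z₀' := fun h => absurd (hZ0le x h) (not_le.mpr (hby.trans hyx))
        have hxy : x ≠ y := ne_of_gt hyx
        set mult' : ℝ → ℕ :=
          Function.update (Function.update mult₀' x (mult x - 1)) y 1 with hm'
        have hm'y : mult' y = 1 := by simp [hm']
        have hm'x : mult' x = mult x - 1 := by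
          simp [hm', Function.update_of_ne hxy, Function.update_self]
        have hm'z : ∀ z ∈ Z₀', mult' z = mult₀' z := by
          intro z hz
          have h1 : z ≠ y := fun h => hyZ0' (h ▸ hz)
          have h2 : z ≠ x := fun h => hxZ0' (h ▸ hz)
          simp [hm', Function.update_of_ne h1, Function.update_of_ne h2]
        refine ⟨insert y (insert x Z₀'), mult', ?_, ?_, ?_⟩
        · intro z hz j hj
          rcases Finset.mem_insert.mp hz with rfl | hz
          · rw [hm'y] at hj
            interval_cases j
            simpa using hdy
          rcases Finset.mem_insert.mp hz with rfl | hz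
          · rw [hm'x] at hj
            rw [← iteratedDeriv_succ']
            exact hzero x hxZ (j+1) (by omega)
          · exact hz0 z hz j (by rwa [hm'z z hz] at hj)
        · intro z hz
          refine ⟨x, hxZ, ?_⟩
          rcases Finset.mem_insert.mp hz with rfl | hz
          · exact hyx.le
          rcases Finset.mem_insert.mp hz with rfl | hz
          · exact le_rfl
          · exact (hZ0le z hz).trans (hbx.le.trans le_rfl)
        · have hyni : y ∉ insert x Z₀' := by
            simp only [Finset.mem_insert]
            push_neg
            exact ⟨fun h => hxy h.symm, hyZ0'⟩
          have hcong : ∑ z ∈ Z₀', mult' z = ∑ z ∈ Z₀', mult₀' z :=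
            Finset.sum_congr rfl hm'z
          rw [Finset.sum_insert hyni, Finset.sum_insert hxZ0', hm'y, hm'x, hcong, hsumZ]
          omega

lemma ZB.rolle {f : ℝ → ℝ} (hf : Continuous f) {M : ℕ} (h : ZB (deriv f) M) :
    ZB f (M + 1) := by
  intro Z mult hpos hzero
  obtain ⟨Z', mult', hz, -, hs⟩ := rolle_count f hf Z mult hpos hzero
  refine hs.trans (Nat.add_le_add_right ?_ 1)
  calc ∑ x ∈ Z', mult' x = ∑ x ∈ Z'.filter (fun z => mult' z ≠ 0), mult' x :=
        (Finset.sum_filter_ne_zero _).symm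
    _ ≤ M := h _ mult' (fun x hx => Nat.pos_of_ne_zero (Finset.mem_filter.mp hx).2)
        (fun x hx => hz x (Finset.mem_filter.mp hx).1)

lemma natDegree_deriv_real {p : Polynomial ℝ} (hp : p.natDegree ≠ 0) :
    p.derivative ≠ 0 ∧ p.derivative.natDegree = p.natDegree - 1 := by
  set d := p.natDegree with hd
  have hpne : p ≠ 0 := fun h => hp (by simp [hd, h])
  have hc : p.derivative.coeff (d - 1) ≠ 0 := by
    rw [Polynomial.coeff_derivative]
    have h1 : d - 1 + 1 = d := by omega
    rw [h1]
    have hcd : p.coeff d ≠ 0 := by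
      rw [hd]; exact Polynomial.leadingCoeff_ne_zero.mpr hpne
    have hpos : (0 : ℝ) < (d - 1 : ℕ) + 1 := by positivity
    exact mul_ne_zero hcd (ne_of_gt hpos)
  have hne : p.derivative ≠ 0 := fun h => hc (by simp [h])
  have hge : d - 1 ≤ p.derivative.natDegree := Polynomial.le_natDegree_of_ne_zero hc
  exact ⟨hne, le_antisymm (Polynomial.natDegree_derivative_le p) hge⟩

lemma Qfact {b : ℝ} (hb : b ≠ 0) {p : Polynomial ℝ} (hp : p ≠ 0) :
    (p.derivative + Polynomial.C b * p) ≠ 0 ∧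
      (p.derivative + Polynomial.C b * p).natDegree = p.natDegree := by
  have hCb : (Polynomial.C b * p).natDegree = p.natDegree := Polynomial.natDegree_C_mul hb
  by_cases h0 : p.natDegree = 0
  · obtain ⟨c, rfl⟩ := Polynomial.natDegree_eq_zero.mp h0
    have hc : c ≠ 0 := fun h => hp (by simp [h])
    rw [Polynomial.derivative_C, zero_add, ← Polynomial.C_mul]
    refine ⟨Polynomial.C_ne_zero.mpr (mul_ne_zero hb hc), ?_⟩
    simp only [Polynomial.natDegree_C, ← Polynomial.C_mul]
  · have hlt : p.derivative.natDegree < (Polynomial.C b * p).natDegree := by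
      rw [hCb]; exact Polynomial.natDegree_derivative_lt h0
    have hdeg := Polynomial.natDegree_add_eq_right_of_natDegree_lt hlt
    rw [hCb] at hdeg
    refine ⟨fun h => h0 ?_, hdeg⟩
    rw [← hdeg, h, Polynomial.natDegree_zero]

lemma deriv_sum_exp (n : ℕ) (P : Fin n → Polynomial ℝ) (b : Fin n → ℝ) :
    deriv (fun x => ∑ i, (P i).eval x * Real.exp (b i * x)) =
      fun x => ∑ i, ((P i).derivative + Polynomial.C (b i) * P i).eval x
        * Real.exp (b i * x) := by
  funext x
  have h : HasDerivAt (fun x => ∑ i, (P i).eval x * Real.exp (b i * x))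
      (∑ i, ((P i).derivative + Polynomial.C (b i) * P i).eval x * Real.exp (b i * x)) x := by
    refine HasDerivAt.fun_sum fun i _ => ?_
    have he : HasDerivAt (fun x : ℝ => Real.exp (b i * x)) (Real.exp (b i * x) * b i) x := by
      simpa [Function.comp_def] using (Real.hasDerivAt_exp (b i * x)).comp x
        ((hasDerivAt_id x).const_mul (b i))
    have := ((P i).hasDerivAt x).fun_mul he
    convert this using 1
    · rfl
    simp [Polynomial.eval_add, Polynomial.eval_mul]
    ring
  exact h.deriv

lemma gsmooth (n : ℕ) (P : Fin n → Polynomial ℝ) (a : Fin n → ℝ) :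
    ContDiff ℝ ∞ (fun x => ∑ i, (P i).eval x * Real.exp (a i * x)) :=
  ContDiff.sum fun i _ => (contDiff_polyeval _).mul
    (Real.contDiff_exp.comp (contDiff_const.mul contDiff_id))


lemma ZB_of_mul {u g : ℝ → ℝ} (hu : ContDiff ℝ ∞ u) (hg : ContDiff ℝ ∞ g) {M : ℕ}
    (h : ZB (fun x => u x * g x) M) : ZB g M := by
  intro Z mult hpos hzero
  exact h Z mult hpos fun x hx j hj =>
    vanish_mul j u g hu hg x fun j' hj' => hzero x hx j' (lt_of_le_of_lt hj' hj)

lemma key (N : ℕ) : ∀ (n : ℕ), 0 < n → ∀ (P : Fin n → Polynomial ℝ) (m : Fin n → ℕ)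
    (a : Fin n → ℝ), (∀ i, P i ≠ 0) → (∀ i, 1 ≤ m i) → (∀ i, (P i).natDegree = m i - 1) →
    StrictMono a → ∑ i, m i = N →
    ZB (fun x => ∑ i, (P i).eval x * Real.exp (a i * x)) (N - 1) := by
  induction N with
  | zero =>
      intro n hn P m a hP hm hdeg ha hsum
      exfalso
      have h1 : m ⟨0, hn⟩ ≤ ∑ i, m i :=
        Finset.single_le_sum (fun i _ => Nat.zero_le (m i)) (Finset.mem_univ _)
      have := hm ⟨0, hn⟩
      omega
  | succ N ih =>
      intro n hn P m a hP hm hdeg ha hsum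
      obtain ⟨k, rfl⟩ := Nat.exists_eq_succ_of_ne_zero hn.ne'
      by_cases hbase : k = 0 ∧ m 0 = 1
      · -- base case: single nonzero constant times exponential, never zero
        obtain ⟨rfl, hm0⟩ := hbase
        obtain ⟨c, hc⟩ := Polynomial.natDegree_eq_zero.mp
          (show (P 0).natDegree = 0 by rw [hdeg 0, hm0])
        have hcne : c ≠ 0 := fun h => hP 0 (by rw [← hc, h, map_zero])
        intro Z mult hpos hzero
        have hZ : Z = ∅ := by
          refine Finset.eq_empty_of_forall_notMem fun x hx => ?_
          have h0 := hzero x hx 0 (hpos x hx)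
          rw [iteratedDeriv_zero] at h0
          simp only [Fin.sum_univ_one, ← hc, Polynomial.eval_C] at h0
          exact (mul_ne_zero hcne (Real.exp_ne_zero _)) h0
        simp [hZ]
      · -- inductive step
        set b : Fin (k+1) → ℝ := fun i => a i - a 0 with hbdef
        set Q : Fin (k+1) → Polynomial ℝ :=
          fun i => (P i).derivative + Polynomial.C (b i) * P i with hQdef
        set g : ℝ → ℝ := fun x => ∑ i, (P i).eval x * Real.exp (a i * x) with hgdef
        set h : ℝ → ℝ := fun x => ∑ i, (P i).eval x * Real.exp (b i * x) with hhdef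
        set u : ℝ → ℝ := fun x => Real.exp (-a 0 * x) with hudef
        have hg : ContDiff ℝ ∞ g := gsmooth _ P a
        have hh : ContDiff ℝ ∞ h := gsmooth _ P b
        have hu : ContDiff ℝ ∞ u :=
          Real.contDiff_exp.comp (contDiff_const.mul contDiff_id)
        have hug : (fun x => u x * g x) = h := by
          funext x
          rw [hudef, hgdef, hhdef]
          simp only [Finset.mul_sum]
          refine Finset.sum_congr rfl fun i _ => ?_
          rw [mul_left_comm, ← Real.exp_add]
          congr 2
          show -a 0 * x + a i * x = (a i - a 0) * x
          ring
        have hdh : deriv h = fun x => ∑ i, (Q i).eval x * Real.exp (b i * x) :=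
          deriv_sum_exp _ P b
        have hb0 : b 0 = 0 := sub_self _
        have hbne : ∀ i : Fin (k+1), i ≠ 0 → b i ≠ 0 := fun i hi =>
          sub_ne_zero_of_ne (ne_of_gt (ha (Fin.pos_of_ne_zero hi)))
        have hbmono : StrictMono b := fun i j hij => sub_lt_sub_right (ha hij) _
        have hQfact : ∀ i : Fin (k+1), i ≠ 0 →
            Q i ≠ 0 ∧ (Q i).natDegree = m i - 1 := by
          intro i hi
          obtain ⟨h1, h2⟩ := Qfact (hbne i hi) (hP i)
          exact ⟨h1, h2.trans (hdeg i)⟩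
        -- establish ZB (deriv h) (N - 1) and 1 ≤ N
        have hmain : ZB (deriv h) (N - 1) ∧ 1 ≤ N := by
          by_cases hm0 : m 0 = 1
          · -- first polynomial is constant: its derivative term drops out
            have hk : k ≠ 0 := fun h' => hbase ⟨h', hm0⟩
            obtain ⟨j, rfl⟩ := Nat.exists_eq_succ_of_ne_zero hk
            obtain ⟨c, hc⟩ := Polynomial.natDegree_eq_zero.mp
              (show (P 0).natDegree = 0 by rw [hdeg 0, hm0])
            have hQ0 : Q 0 = 0 := by
              rw [hQdef]
              simp only [hb0, map_zero, zero_mul, add_zero, ← hc, Polynomial.derivative_C]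
            have hN1 : 1 ≤ N := by
              have h1 : m 1 ≤ ∑ i, m i :=
                Finset.single_le_sum (fun i _ => Nat.zero_le (m i)) (Finset.mem_univ _)
              have h0 : m 0 + m 1 ≤ ∑ i, m i := by
                have heq : m 0 + ∑ i ∈ Finset.univ.erase (0 : Fin (j+2)), m i = ∑ i, m i :=
                  Finset.add_sum_erase Finset.univ m (Finset.mem_univ (0 : Fin (j+2)))
                have h1' : m 1 ≤ ∑ i ∈ Finset.univ.erase (0 : Fin (j+2)), m i :=
                  Finset.single_le_sum (fun i _ => Nat.zero_le (m i))
                    (Finset.mem_erase.mpr ⟨one_ne_zero, Finset.mem_univ _⟩)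
                omega
              have := hm 1
              omega
            have hsum' : ∑ i : Fin (j+1), m i.succ = N := by
              rw [Fin.sum_univ_succ] at hsum
              omega
            have hihg := ih (j+1) (Nat.succ_pos j) (fun i => Q i.succ) (fun i => m i.succ)
              (fun i => b i.succ) (fun i => (hQfact i.succ (Fin.succ_ne_zero i)).1)
              (fun i => hm i.succ) (fun i => (hQfact i.succ (Fin.succ_ne_zero i)).2)
              (fun i j hij => hbmono (Fin.succ_lt_succ_iff.mpr hij)) hsum'
            have heq : deriv h = fun x => ∑ i : Fin (j+1),
                (Q i.succ).eval x * Real.exp (b i.succ * x) := by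
              rw [hdh]
              funext x
              rw [Fin.sum_univ_succ, hQ0]
              simp
            rw [heq]
            exact ⟨hihg, hN1⟩
          · -- differentiate the first polynomial
            have hm02 : 2 ≤ m 0 := by have := hm 0; omega
            have hd0 : (P 0).natDegree ≠ 0 := by rw [hdeg 0]; omega
            obtain ⟨hd1, hd2⟩ := natDegree_deriv_real hd0
            have hQ0 : Q 0 = (P 0).derivative := by
              rw [hQdef]; simp only [hb0, map_zero, zero_mul, add_zero]
            set m' : Fin (k+1) → ℕ := fun i => if i = 0 then m 0 - 1 else m i with hm'def
            have hsum' : ∑ i, m' i = N := by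
              rw [Fin.sum_univ_succ] at hsum ⊢
              have : ∀ i : Fin k, m' i.succ = m i.succ := fun i => by
                rw [hm'def]; simp [Fin.succ_ne_zero i]
              rw [Finset.sum_congr rfl fun i _ => this i]
              simp only [hm'def, if_pos rfl]
              omega
            have hN1 : 1 ≤ N := by
              have h1 : m' 0 ≤ ∑ i, m' i :=
                Finset.single_le_sum (fun i _ => Nat.zero_le (m' i)) (Finset.mem_univ _)
              have : m' 0 = m 0 - 1 := by rw [hm'def]; simp
              omega
            have hihg := ih (k+1) (Nat.succ_pos k) Q m' b
              (fun i => by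
                by_cases hi : i = 0
                · subst hi; rw [hQ0]; exact hd1
                · exact (hQfact i hi).1)
              (fun i => by
                by_cases hi : i = 0
                · subst hi; simp only [hm'def, if_pos rfl]; omega
                · simp only [hm'def, if_neg hi]; exact hm i)
              (fun i => by
                by_cases hi : i = 0
                · subst hi
                  rw [hQ0, hd2, hdeg 0]
                  simp only [hm'def, if_pos rfl]
                · rw [(hQfact i hi).2]
                  simp only [hm'def, if_neg hi])
              hbmono hsum'
            rw [hdh]
            exact ⟨hihg, hN1⟩
        obtain ⟨hZBdh, hN1⟩ := hmain
        have hZBh : ZB h N := by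
          have := ZB.rolle hh.continuous hZBdh
          rwa [Nat.sub_add_cancel hN1] at this
        have : ZB g ((N + 1) - 1) := by
          rw [Nat.add_sub_cancel]
          exact ZB_of_mul hu hg (hug ▸ hZBh)
        exact this



/-- Pólya–Szegő bound on the zeros of exponential polynomials: if `P₁, …, Pₙ` are nonzero
real polynomials of degrees `m₁ - 1, …, mₙ - 1` (each `mᵢ ≥ 1`) and `a₁ < ⋯ < aₙ`, then
`g(x) = Σᵢ Pᵢ(x) e^(aᵢ x)` has at most `(Σᵢ mᵢ) - 1` real zeros counting multiplicity
(a zero of multiplicity `k` being a point where `g` and its first `k - 1` derivatives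
vanish). -/
theorem stmt_15 (n : ℕ) (hn : 0 < n) (P : Fin n → Polynomial ℝ) (m : Fin n → ℕ)
    (hP : ∀ i, P i ≠ 0) (hm1 : ∀ i, 1 ≤ m i) (hdeg : ∀ i, (P i).natDegree = m i - 1)
    (a : Fin n → ℝ) (ha : StrictMono a)
    (Z : Finset ℝ) (mult : ℝ → ℕ) (hmult : ∀ x ∈ Z, 0 < mult x)
    (hzero : ∀ x ∈ Z, ∀ j < mult x,
      iteratedDeriv j (fun x : ℝ => ∑ i, (P i).eval x * Real.exp (a i * x)) x = 0) :
    ∑ x ∈ Z, mult x ≤ (∑ i, m i) - 1 := by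
  exact key (∑ i, m i) n hn P m a hP hm1 hdeg ha rfl Z mult hmult hzero
end

section
/- Let ζ ∈ (0,1), δ ∈ (0, ζ), and t ∈ [0, ζ - δ], and let P, P* ∈ [0,1] be real numbers. Then 1{P ≤ t} - 1{P* ≤ t + δ} ≤ (1/δ)·|min(P, ζ) - min(P*, ζ)|. Similarly, for t ∈ (0, ζ] and δ ∈ (0, t): 1{P ≤ t} - 1{P* ≤ t - δ} ≥ -(1/δ)·|min(P, ζ) - min(P*, ζ)|. -/
/-!
If `P ≤ t` while `P* > t + δ` (with `t + δ ≤ ζ`), truncation at `ζ` keeps `P` below `t` and `P*`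
above `t + δ`, so `|min P ζ - min P* ζ| ≥ δ` and the right-hand side is at least `1`; in every
other case the indicator difference is at most `0`. The lower bound is the same argument with
the roles of `P` and `P*` exchanged.
-/

theorem ite_one_zero_sub_ite_one_zero_le {R : Type*} [Ring R] [PartialOrder R]
    [IsOrderedRing R] {p q : Prop} [Decidable p] [Decidable q] {c : R} (hc : 0 ≤ c)
    (h : p → ¬q → 1 ≤ c) :
    (if p then (1 : R) else 0) - (if q then (1 : R) else 0) ≤ c := by
  split_ifs with hp hq
  · simpa using hc
  · simpa using h hp hq
  · simpa using (neg_nonpos.mpr zero_le_one).trans hc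
  · simpa using hc

theorem one_le_one_div_mul_abs_min_sub_min {K : Type*} [Field K] [LinearOrder K]
    [IsStrictOrderedRing K] {a b s δ ζ : K} (hδ : 0 < δ) (ha : a ≤ s) (hb : s + δ < b)
    (hs : s + δ ≤ ζ) : 1 ≤ 1 / δ * |min a ζ - min b ζ| := by
  have gap : δ ≤ min b ζ - min a ζ := by
    linarith [min_le_left a ζ, le_min hb.le hs]
  rw [one_div_mul_eq_div, le_div_iff₀ hδ, one_mul, abs_sub_comm]
  exact gap.trans (le_abs_self _)

theorem stmt_17_general (ζ : ℝ)
    (P Pstar : ℝ) :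
    (∀ δ t : ℝ, δ ∈ Set.Ioo 0 ζ → t ∈ Set.Icc 0 (ζ - δ) →
      (if P ≤ t then (1 : ℝ) else 0) - (if Pstar ≤ t + δ then (1 : ℝ) else 0) ≤
        (1 / δ) * |min P ζ - min Pstar ζ|) ∧
    (∀ t δ : ℝ, t ∈ Set.Ioc 0 ζ → δ ∈ Set.Ioo 0 t →
      -((1 / δ) * |min P ζ - min Pstar ζ|) ≤
        (if P ≤ t then (1 : ℝ) else 0) - (if Pstar ≤ t - δ then (1 : ℝ) else 0)) := by
  constructor
  · rintro δ t ⟨hδ, -⟩ ⟨-, htζ⟩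
    refine ite_one_zero_sub_ite_one_zero_le (by positivity) fun hP hPstar => ?_
    exact one_le_one_div_mul_abs_min_sub_min hδ hP (not_le.mp hPstar) (by linarith)
  · rintro t δ ⟨-, htζ⟩ ⟨hδ, -⟩
    rw [neg_le, neg_sub]
    refine ite_one_zero_sub_ite_one_zero_le (by positivity) fun hPstar hP => ?_
    rw [abs_sub_comm]
    exact one_le_one_div_mul_abs_min_sub_min hδ hPstar (by linarith [not_le.mp hP])
      (by linarith)

/-- Deterministic smoothing inequality converting differences of threshold indicators into
`L¹`-type distances between truncated p-values. -/
theorem stmt_17 (ζ : ℝ) (hζ : ζ ∈ Set.Ioo (0 : ℝ) 1)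
    (P Pstar : ℝ) (hP : P ∈ Set.Icc (0 : ℝ) 1) (hPstar : Pstar ∈ Set.Icc (0 : ℝ) 1) :
    (∀ δ t : ℝ, δ ∈ Set.Ioo 0 ζ → t ∈ Set.Icc 0 (ζ - δ) →
      (if P ≤ t then (1 : ℝ) else 0) - (if Pstar ≤ t + δ then (1 : ℝ) else 0) ≤
        (1 / δ) * |min P ζ - min Pstar ζ|) ∧
    (∀ t δ : ℝ, t ∈ Set.Ioc 0 ζ → δ ∈ Set.Ioo 0 t →
      -((1 / δ) * |min P ζ - min Pstar ζ|) ≤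
        (if P ≤ t then (1 : ℝ) else 0) - (if Pstar ≤ t - δ then (1 : ℝ) else 0)) :=
  stmt_17_general ζ P Pstar
end
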